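/- Let G=(V,E) be a finite simple graph on n vertices and let k be an integer with 1 ≤ k < n. Construct the graph G'=(V',E') as follows: V' contains a copy v' of every vertex v ∈ V, a vertex e_{uv} for every edge {u,v} ∈ E adjacent exactly to u' and v', and k+1 additional vertices x_1, …, x_{k+1}, each adjacent exactly to all n copy vertices; equip G' with unanimity thresholds, i.e., thr(x) = deg_{G'}(x) for every x ∈ V'. Then the maximum of |σ(S')| over all S' ⊆ V' with |S'| ≤ k equals the maximum number of edges of an induced subgraph of G on at most k vertices. -/

import Mathlib

open scoped Classical

variable {V : Type*} [Fintype V]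

/-- The open neighborhood of `v` as a `Finset`. -/
noncomputable def nbr (G : SimpleGraph V) (v : V) : Finset V :=
  Finset.univ.filter fun w => G.Adj v w

/-- The degree of a vertex. -/
noncomputable def deg (G : SimpleGraph V) (v : V) : ℕ := (nbr G v).card

/-- One round of the activation process: active vertices stay active and every vertex
having at least `thr v` active neighbors becomes active. -/
noncomputable def actStep (G : SimpleGraph V) (thr : V → ℕ) (A : Finset V) : Finset V :=
  A ∪ Finset.univ.filter fun v => thr v ≤ (nbr G v ∩ A).card

/-- `sigmaCl G thr S` = σ[S], the set of vertices active at the end of the activation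
process started with seed set `S` (iterating `|V|` rounds suffices to stabilize). -/
noncomputable def sigmaCl (G : SimpleGraph V) (thr : V → ℕ) (S : Finset V) : Finset V :=
  (actStep G thr)^[Fintype.card V] S

/-- `sigmaOp G thr S` = σ(S) = σ[S] \ S, the open activated set. -/
noncomputable def sigmaOp (G : SimpleGraph V) (thr : V → ℕ) (S : Finset V) : Finset V :=
  sigmaCl G thr S \ S

/-- The densest-k-subgraph reduction graph: a copy `Sum.inl v` of every vertex of G, an
edge-vertex `Sum.inr (Sum.inl e)` for every edge e of G adjacent exactly to the copies
of its two endpoints, and k+1 vertices `Sum.inr (Sum.inr i)` each adjacent exactly to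
all copy vertices. -/
noncomputable def dksRed (G : SimpleGraph V) (k : ℕ) :
    SimpleGraph (V ⊕ (G.edgeSet ⊕ Fin (k + 1))) :=
  SimpleGraph.fromRel fun x y =>
    (∃ (e : G.edgeSet) (v : V),
      x = Sum.inl v ∧ y = Sum.inr (Sum.inl e) ∧ v ∈ (e : Sym2 V)) ∨
    (∃ (i : Fin (k + 1)) (v : V), x = Sum.inl v ∧ y = Sum.inr (Sum.inr i))

/-!
With unanimity thresholds a vertex becomes active exactly when its whole neighbourhood is
active. A seed set of size at most `k` misses some copy vertex `w'` and one of the `k + 1` hubs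
`x_j`; since `x_j` is adjacent to every copy and `w'` to every hub, no copy or hub can ever be
activated, so the only vertices a seed `S'` activates are the edge vertices whose two endpoint
copies lie in `S'`. Conversely, seeding the copies of `U` activates exactly the edge vertices of
the edges inside `U`.
-/

lemma card_le_card_inter_iff {α : Type*} [DecidableEq α] (s A : Finset α) :
    s.card ≤ (s ∩ A).card ↔ s ⊆ A := by
  rw [← Finset.inter_eq_left]
  exact ⟨Finset.eq_of_subset_of_card_le Finset.inter_subset_left, fun h => by rw [h]⟩

lemma exists_apply_notMem_of_card_lt {α β : Type*} [Fintype α] (f : α ↪ β) (S : Finset β)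
    (hS : S.card < Fintype.card α) : ∃ a, f a ∉ S := by
  by_contra! h
  exact hS.not_ge (Finset.card_le_card_of_injOn f (fun a _ => h a) f.injective.injOn)

section Activation

variable (G : SimpleGraph V)

lemma mem_actStep_deg (A : Finset V) (v : V) :
    v ∈ actStep G (deg G) A ↔ v ∈ A ∨ nbr G v ⊆ A := by
  simp [actStep, deg, card_le_card_inter_iff]

lemma subset_actStep (thr : V → ℕ) (A : Finset V) : A ⊆ actStep G thr A :=
  Finset.subset_union_left

lemma actStep_mono (thr : V → ℕ) : Monotone (actStep G thr) := fun _ _ h =>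
  Finset.union_subset_union h <| Finset.monotone_filter_right _ fun _ _ hv =>
    hv.trans (Finset.card_le_card (Finset.inter_subset_inter le_rfl h))

lemma actStep_subset_sigmaCl (thr : V → ℕ) (S : Finset V) :
    actStep G thr S ⊆ sigmaCl G thr S := by
  rcases (Fintype.card V).eq_zero_or_pos with hV | hV
  · have : IsEmpty V := Fintype.card_eq_zero_iff.mp hV
    simp [Finset.eq_empty_of_isEmpty]
  · obtain ⟨m, hm⟩ := Nat.exists_eq_succ_of_ne_zero hV.ne'
    rw [sigmaCl, hm, Function.iterate_succ_apply]
    exact Function.id_le_iterate_of_id_le (subset_actStep G thr) m _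

lemma sigmaCl_subset_of_actStep_subset (thr : V → ℕ) {S B : Finset V} (hSB : S ⊆ B)
    (hB : actStep G thr B ⊆ B) : sigmaCl G thr S ⊆ B := by
  suffices ∀ m, (actStep G thr)^[m] S ⊆ B from this _
  intro m
  induction m with
  | zero => exact hSB
  | succ m ih =>
    rw [Function.iterate_succ_apply']
    exact (actStep_mono G thr ih).trans hB

lemma sigmaCl_eq_of_actStep_subset (thr : V → ℕ) {S B : Finset V} (hSB : S ⊆ B)
    (hBS : B ⊆ actStep G thr S) (hB : actStep G thr B ⊆ B) : sigmaCl G thr S = B :=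
  (sigmaCl_subset_of_actStep_subset G thr hSB hB).antisymm
    (hBS.trans (actStep_subset_sigmaCl G thr S))

lemma mem_sigmaOp (thr : V → ℕ) (S : Finset V) (x : V) :
    x ∈ sigmaOp G thr S ↔ x ∈ sigmaCl G thr S ∧ x ∉ S := by
  rw [sigmaOp, Finset.mem_sdiff]

end Activation

section Reduction

variable (G : SimpleGraph V) (k : ℕ)

noncomputable def dksEdgeVertices (U : Finset V) : Finset (V ⊕ (G.edgeSet ⊕ Fin (k + 1))) :=
  (Finset.univ.filter fun e : G.edgeSet => ∀ v ∈ (e : Sym2 V), v ∈ U).map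
    (Function.Embedding.inl.trans Function.Embedding.inr)

lemma card_dksEdgeVertices (U : Finset V) :
    (dksEdgeVertices G k U).card = (G.edgeFinset.filter fun e => ∀ v ∈ e, v ∈ U).card := by
  rw [dksEdgeVertices, Finset.card_map]
  refine Finset.card_bij (fun e _ => (e : Sym2 V)) ?_ (fun _ _ _ _ => Subtype.ext) ?_
  · intro e he
    simpa using he
  · intro e he
    rw [Finset.mem_filter, SimpleGraph.mem_edgeFinset] at he
    exact ⟨⟨e, he.1⟩, by simpa using he.2, rfl⟩

lemma hub_mem_nbr_dksRed_inl (v : V) (i : Fin (k + 1)) :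
    Sum.inr (Sum.inr i) ∈ nbr (dksRed G k) (Sum.inl v) := by
  simp [nbr, dksRed]

lemma inl_mem_nbr_dksRed_hub (v : V) (i : Fin (k + 1)) :
    Sum.inl v ∈ nbr (dksRed G k) (Sum.inr (Sum.inr i)) := by
  simp [nbr, dksRed]

lemma mem_nbr_dksRed_edge (e : G.edgeSet) (x : V ⊕ (G.edgeSet ⊕ Fin (k + 1))) :
    x ∈ nbr (dksRed G k) (Sum.inr (Sum.inl e)) ↔ ∃ v ∈ (e : Sym2 V), x = Sum.inl v := by
  rcases x with _ | _ | _ <;> simp [nbr, dksRed]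

lemma actStep_union_dksEdgeVertices_subset {S : Finset (V ⊕ (G.edgeSet ⊕ Fin (k + 1)))}
    {U : Finset V} (hU : ∀ v, Sum.inl v ∈ S → v ∈ U) {j : Fin (k + 1)}
    (hj : Sum.inr (Sum.inr j) ∉ S) {w : V} (hw : Sum.inl w ∉ S) :
    actStep (dksRed G k) (deg (dksRed G k)) (S ∪ dksEdgeVertices G k U) ⊆
      S ∪ dksEdgeVertices G k U := by
  intro x hx
  rcases (mem_actStep_deg _ _ x).mp hx with hx | hnbr
  · exact hx
  rcases x with v | e | i
  · have := hnbr (hub_mem_nbr_dksRed_inl G k v j)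
    simp [dksEdgeVertices, hj] at this
  · refine Finset.mem_union_right _ (Finset.mem_map.mpr
      ⟨e, Finset.mem_filter.mpr ⟨Finset.mem_univ _, fun v hv => hU v ?_⟩, rfl⟩)
    have := hnbr ((mem_nbr_dksRed_edge G k e _).mpr ⟨v, hv, rfl⟩)
    simpa [dksEdgeVertices] using this
  · have := hnbr (inl_mem_nbr_dksRed_hub G k w i)
    simp [dksEdgeVertices, hw] at this

lemma sigmaOp_dksRed_subset {S : Finset (V ⊕ (G.edgeSet ⊕ Fin (k + 1)))}
    {U : Finset V} (hU : ∀ v, Sum.inl v ∈ S → v ∈ U) {j : Fin (k + 1)}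
    (hj : Sum.inr (Sum.inr j) ∉ S) {w : V} (hw : Sum.inl w ∉ S) :
    sigmaOp (dksRed G k) (deg (dksRed G k)) S ⊆ dksEdgeVertices G k U := by
  intro x hx
  rw [mem_sigmaOp] at hx
  have hcl := sigmaCl_subset_of_actStep_subset _ _ Finset.subset_union_left
    (actStep_union_dksEdgeVertices_subset G k hU hj hw)
  exact (Finset.mem_union.mp (hcl hx.1)).resolve_left hx.2

lemma dksEdgeVertices_subset_actStep (U : Finset V) :
    dksEdgeVertices G k U ⊆
      actStep (dksRed G k) (deg (dksRed G k)) (U.map Function.Embedding.inl) := by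
  intro x hx
  obtain ⟨e, he, rfl⟩ := Finset.mem_map.mp hx
  refine (mem_actStep_deg _ _ _).mpr (Or.inr fun y hy => ?_)
  obtain ⟨v, hv, rfl⟩ := (mem_nbr_dksRed_edge G k e y).mp hy
  exact Finset.mem_map_of_mem _ ((Finset.mem_filter.mp he).2 v hv)

lemma sigmaOp_dksRed_map_inl {U : Finset V} {w : V} (hw : w ∉ U) :
    sigmaOp (dksRed G k) (deg (dksRed G k)) (U.map Function.Embedding.inl) =
      dksEdgeVertices G k U := by
  have hB := actStep_union_dksEdgeVertices_subset G k (S := U.map Function.Embedding.inl)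
    (U := U) (j := 0) (by simp) (by simp) (by simpa using hw)
  ext x
  rw [mem_sigmaOp, sigmaCl_eq_of_actStep_subset _ _ Finset.subset_union_left
    (Finset.union_subset (subset_actStep _ _ _) (dksEdgeVertices_subset_actStep G k U)) hB,
    Finset.mem_union]
  refine ⟨fun ⟨hx, hxS⟩ => hx.resolve_left hxS, fun hx => ⟨Or.inr hx, fun hxS => ?_⟩⟩
  obtain ⟨v, -, rfl⟩ := Finset.mem_map.mp hxS
  simp [dksEdgeVertices] at hx

lemma exists_card_sigmaOp_dksRed_le {S : Finset (V ⊕ (G.edgeSet ⊕ Fin (k + 1)))}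
    (hS : S.card ≤ k) (hk : k < Fintype.card V) :
    ∃ U : Finset V, U.card ≤ k ∧ (sigmaOp (dksRed G k) (deg (dksRed G k)) S).card ≤
      (G.edgeFinset.filter fun e => ∀ v ∈ e, v ∈ U).card := by
  obtain ⟨j, hj⟩ := exists_apply_notMem_of_card_lt
    (Function.Embedding.inr.trans Function.Embedding.inr) S (by rw [Fintype.card_fin]; omega)
  obtain ⟨w, hw⟩ := exists_apply_notMem_of_card_lt Function.Embedding.inl S (by omega)
  refine ⟨S.preimage Sum.inl Sum.inl_injective.injOn, ?_, ?_⟩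
  · exact le_trans (Finset.card_le_card_of_injOn Sum.inl
      (fun _ hv => Finset.mem_preimage.mp hv) Sum.inl_injective.injOn) hS
  · rw [← card_dksEdgeVertices G k]
    exact Finset.card_le_card
      (sigmaOp_dksRed_subset G k (fun _ hv => Finset.mem_preimage.mpr hv) hj hw)

end Reduction

theorem stmt13_general (G : SimpleGraph V) (k : ℕ) (hk2 : k < Fintype.card V) :
    ((Finset.univ.filter fun S' : Finset (V ⊕ (G.edgeSet ⊕ Fin (k + 1))) =>
        S'.card ≤ k).sup fun S' => (sigmaOp (dksRed G k) (deg (dksRed G k)) S').card) =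
    ((Finset.univ.filter fun U : Finset V => U.card ≤ k).sup fun U =>
      (G.edgeFinset.filter fun e => ∀ v ∈ e, v ∈ U).card) := by
  apply le_antisymm
  · refine Finset.sup_le fun S hS => ?_
    obtain ⟨U, hU, hSU⟩ := exists_card_sigmaOp_dksRed_le G k (Finset.mem_filter.mp hS).2 hk2
    exact hSU.trans (Finset.le_sup (f := fun U : Finset V =>
      (G.edgeFinset.filter fun e => ∀ v ∈ e, v ∈ U).card) (by simpa using hU))
  · refine Finset.sup_le fun U hU => ?_
    replace hU : U.card ≤ k := (Finset.mem_filter.mp hU).2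
    obtain ⟨w, -, hw⟩ := Finset.exists_mem_notMem_of_card_lt_card (s := U) (t := Finset.univ)
      (by rw [Finset.card_univ]; omega)
    calc _ = (sigmaOp (dksRed G k) (deg (dksRed G k)) (U.map Function.Embedding.inl)).card := by
          rw [sigmaOp_dksRed_map_inl G k hw, card_dksEdgeVertices]
      _ ≤ _ := Finset.le_sup (f := fun S : Finset (V ⊕ (G.edgeSet ⊕ Fin (k + 1))) =>
          (sigmaOp (dksRed G k) (deg (dksRed G k)) S).card) (by simpa using hU)

/-- In the reduction graph with unanimity thresholds, the maximum of |σ(S')| over seed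
sets of size at most k equals the maximum number of edges of an induced subgraph of G
on at most k vertices. -/
theorem stmt13 (G : SimpleGraph V) (k : ℕ) (hk1 : 1 ≤ k) (hk2 : k < Fintype.card V) :
    ((Finset.univ.filter fun S' : Finset (V ⊕ (G.edgeSet ⊕ Fin (k + 1))) =>
        S'.card ≤ k).sup fun S' => (sigmaOp (dksRed G k) (deg (dksRed G k)) S').card) =
    ((Finset.univ.filter fun U : Finset V => U.card ≤ k).sup fun U =>
      (G.edgeFinset.filter fun e => ∀ v ∈ e, v ∈ U).card) :=
  stmt13_general G k hk2
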